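/- Let M ≥ 2 be an even integer. Then the modified DST matrix S ∈ ℝ^{M×M} has rank M−1. -/

import Mathlib

/-- The modified DST matrix `S ∈ ℝ^{M×M}` (row 0 replaced by the constant row `√(1/M)`). -/
noncomputable def modDstMat (M : ℕ) : Matrix (Fin M) (Fin M) ℝ :=
  Matrix.of fun k n =>
    if (k : ℕ) = 0 then Real.sqrt (1 / M)
    else Real.sqrt (2 / M) * Real.sin (Real.pi / M * (k : ℕ) * ((n : ℕ) + 1 / 2))

open Real Finset Matrix

/-!
For `1 ≤ k < M` the sine rows of `S` are orthogonal with squared length `M / 2`: by the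
product-to-sum formula this reduces to `∑_{n < M} cos (π j (n + 1/2) / M) = 0` for `2M ∤ j`,
which telescopes after multiplication by `2 sin (π j / 2M)`. So the last `M - 1` rows are
independent. The alternating vector `((-1)^n)_n` is the sine row with `k = M`, hence orthogonal
to them as well, and for even `M` also to the constant row `0`; so it is a nonzero kernel vector.
-/

theorem two_mul_sin_half_mul_sum_range_cos (θ : ℝ) (M : ℕ) :
    2 * sin (θ / 2) * ∑ n ∈ range M, cos (θ * (n + 1 / 2)) = sin (θ * M) := by
  rw [mul_sum]
  convert sum_range_sub (fun n : ℕ => sin (θ * n)) M using 2 with n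
  · rw [two_mul_sin_mul_cos]
    push_cast
    ring_nf
    rw [sin_neg]
    ring
  · simp

theorem sum_range_cos_pi_mul_int_div {M : ℕ} {j : ℤ} (hj : ¬ (2 * M : ℤ) ∣ j) :
    ∑ n ∈ range M, cos (π * j / M * (n + 1 / 2)) = 0 := by
  rcases M.eq_zero_or_pos with rfl | hM
  · simp
  have hsin : sin (π * j / M / 2) ≠ 0 := by
    rw [Ne, sin_eq_zero_iff]
    rintro ⟨m, hm⟩
    refine hj ⟨m, ?_⟩
    field_simp at hm
    exact_mod_cast (by linarith [pi_pos] : (j : ℝ) = 2 * M * m)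
  have h := two_mul_sin_half_mul_sum_range_cos (π * j / M) M
  rw [div_mul_cancel₀ _ (by positivity), mul_comm π, sin_int_mul_pi, mul_comm (j : ℝ) π] at h
  exact (mul_eq_zero.mp h).resolve_left (mul_ne_zero two_ne_zero hsin)

theorem sum_range_sin_mul_sin {M k l : ℕ} (hk : 0 < k) (hl : 0 < l) (hkM : k < M)
    (hlM : l ≤ M) :
    ∑ n ∈ range M, sin (π / M * k * (n + 1 / 2)) * sin (π / M * l * (n + 1 / 2)) =
      if k = l then (M / 2 : ℝ) else 0 := by
  have hdiff : ∑ n ∈ range M, cos (π * ((k - l : ℤ) : ℝ) / M * (n + 1 / 2)) =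
      if k = l then (M : ℝ) else 0 := by
    split_ifs with hkl
    · simp [hkl]
    refine sum_range_cos_pi_mul_int_div fun hdvd => hkl ?_
    have := Int.eq_zero_of_abs_lt_dvd hdvd (by rw [abs_lt]; omega)
    omega
  have hsum : ∑ n ∈ range M, cos (π * ((k + l : ℤ) : ℝ) / M * (n + 1 / 2)) = 0 := by
    refine sum_range_cos_pi_mul_int_div fun hdvd => ?_
    have := Int.eq_zero_of_abs_lt_dvd hdvd (by rw [abs_lt]; omega)
    omega
  calc ∑ n ∈ range M, sin (π / M * k * (n + 1 / 2)) * sin (π / M * l * (n + 1 / 2))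
      = ∑ n ∈ range M, (cos (π * ((k - l : ℤ) : ℝ) / M * (n + 1 / 2)) -
          cos (π * ((k + l : ℤ) : ℝ) / M * (n + 1 / 2))) / 2 := by
        refine sum_congr rfl fun n _ => ?_
        rw [eq_div_iff two_ne_zero, mul_comm, ← mul_assoc, two_mul_sin_mul_sin]
        congr 2 <;> push_cast <;> ring
    _ = if k = l then (M / 2 : ℝ) else 0 := by
        rw [← sum_div, sum_sub_distrib, hdiff, hsum]
        split_ifs <;> ring

theorem sin_pi_mul_nat_add_half (n : ℕ) : sin (π * (n + 1 / 2)) = (-1) ^ n := by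
  rw [← cos_nat_mul_pi, ← sin_add_pi_div_two]
  ring_nf

theorem sum_range_sin_mul_neg_one_pow {M k : ℕ} (hk : 0 < k) (hkM : k < M) :
    ∑ n ∈ range M, sin (π / M * k * (n + 1 / 2)) * (-1) ^ n = 0 := by
  have h := sum_range_sin_mul_sin hk (hk.trans hkM) hkM le_rfl
  rw [if_neg hkM.ne, div_mul_cancel₀ π (Nat.cast_pos.mpr (hk.trans hkM)).ne'] at h
  simpa only [sin_pi_mul_nat_add_half] using h

theorem Matrix.rank_lt_card_width_of_mulVec_eq_zero {m n R : Type*} [Fintype n] [Field R]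
    {A : Matrix m n R} {v : n → R} (hv : v ≠ 0) (hAv : A *ᵥ v = 0) :
    A.rank < Fintype.card n := by
  have hker : 0 < Module.finrank R (LinearMap.ker A.mulVecLin) :=
    Module.finrank_pos_iff_exists_ne_zero.mpr ⟨⟨v, hAv⟩, fun h => hv congr(Subtype.val $h)⟩
  have := A.mulVecLin.finrank_range_add_finrank_ker
  rw [Module.finrank_fintype_fun_eq_card] at this
  rw [Matrix.rank]
  omega

theorem modDstMat_mulVec_neg_one_pow {M : ℕ} (hM : Even M) :
    modDstMat M *ᵥ (fun n => (-1) ^ (n : ℕ)) = 0 := by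
  ext k
  simp only [mulVec, dotProduct, modDstMat, of_apply, Pi.zero_apply]
  split_ifs with hk
  · rw [← mul_sum, Fin.sum_univ_eq_sum_range (fun n => (-1 : ℝ) ^ n), neg_one_geom_sum,
      if_pos hM, mul_zero]
  · simp_rw [mul_assoc √(2 / (M : ℝ)), ← mul_sum]
    rw [Fin.sum_univ_eq_sum_range (fun n => sin (π / M * k * (n + 1 / 2)) * (-1) ^ n),
      sum_range_sin_mul_neg_one_pow (Nat.pos_of_ne_zero hk) k.isLt, mul_zero]

theorem modDstMat_succ_mul_transpose (m : ℕ) :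
    (modDstMat (m + 1)).submatrix Fin.succ id * ((modDstMat (m + 1)).submatrix Fin.succ id)ᵀ =
      1 := by
  ext i j
  have hscale (x y : ℝ) : √(2 / (m + 1 : ℕ)) * x * (√(2 / (m + 1 : ℕ)) * y) =
      2 / (m + 1 : ℕ) * (x * y) := by
    rw [mul_mul_mul_comm, Real.mul_self_sqrt (by positivity)]
  rw [one_apply]
  simp only [mul_apply, submatrix_apply, transpose_apply, modDstMat, of_apply, Fin.val_succ,
    Nat.add_one_ne_zero, if_false, id]
  simp_rw [hscale, ← mul_sum]
  rw [Fin.sum_univ_eq_sum_range (fun n => sin (π / (m + 1 : ℕ) * (i + 1 : ℕ) * (n + 1 / 2)) *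
      sin (π / (m + 1 : ℕ) * (j + 1 : ℕ) * (n + 1 / 2))),
    sum_range_sin_mul_sin (Nat.succ_pos _) (Nat.succ_pos _) (by omega) (by omega)]
  simp only [Nat.succ_inj, Fin.val_inj]
  split_ifs
  · field_simp
  · rw [mul_zero]

theorem modDst_rank_general (M : ℕ) (hEven : Even M) :
    (modDstMat M).rank = M - 1 := by
  rcases M with _ | m
  · exact Nat.le_zero.mp (rank_le_width _)
  have hv : (fun n : Fin (m + 1) => (-1 : ℝ) ^ (n : ℕ)) ≠ 0 :=
    fun h => by simpa using congrFun h 0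
  refine le_antisymm ?_ ?_
  · simpa [Nat.lt_succ_iff] using
      rank_lt_card_width_of_mulVec_eq_zero hv (modDstMat_mulVec_neg_one_pow hEven)
  · calc m + 1 - 1 = ((modDstMat (m + 1)).submatrix Fin.succ id).rank := by
          rw [← rank_self_mul_transpose, modDstMat_succ_mul_transpose, rank_one]; simp
      _ ≤ (modDstMat (m + 1)).rank := rank_submatrix_le _ _ _

/-- Proposition 2: `rank S = M − 1`. -/
theorem modDst_rank (M : ℕ) (hM : 2 ≤ M) (hEven : Even M) :
    (modDstMat M).rank = M - 1 :=
  modDst_rank_general M hEven
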